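/- arXiv:1310.0337 — 3 statements merged into one kernel-verified Lean document; each statement's English description precedes it below -/
import Mathlib

section
/- For positive integers r and s, gcd(2^r + 1, 2^s + 1) equals 2^gcd(r,s) + 1 if both r/gcd(r,s) and s/gcd(r,s) are odd, and equals 1 otherwise. -/
/-!
Write `d = gcd r s` and `g = gcd (2^r + 1) (2^s + 1)`, which is odd. Since `g` divides `2^(2r) - 1`
and `2^(2s) - 1`, it divides `2^(2d) - 1 = (2^d + 1)(2^d - 1)`; and `g` is coprime to `2^d - 1`,
a divisor of `2^r - 1`, so `g ∣ 2^d + 1`. If `r/d` and `s/d` are odd, `2^d + 1` divides both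
`2^r + 1` and `2^s + 1`, hence equals `g`. If say `r/d` is even, then `2^d + 1 ∣ 2^(2d) - 1 ∣ 2^r - 1`,
so the odd number `g` divides both `2^r ± 1`, hence `2`, and `g = 1`.
-/

namespace Nat

variable {a m n : ℕ}

lemma pow_two_mul_sub_one (a m : ℕ) : a ^ (2 * m) - 1 = (a ^ m + 1) * (a ^ m - 1) := by
  rw [two_mul, pow_add, mul_self_tsub_one]

lemma pow_add_one_dvd_pow_add_one_of_odd (hmn : m ∣ n) (hodd : Odd (n / m)) :
    a ^ m + 1 ∣ a ^ n + 1 := by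
  simpa [← pow_mul, Nat.mul_div_cancel' hmn] using hodd.nat_add_dvd_pow_add_pow (a ^ m) 1

lemma pow_add_one_dvd_pow_sub_one_of_even (hmn : m ∣ n) (heven : Even (n / m)) :
    a ^ m + 1 ∣ a ^ n - 1 := by
  have h2mn : 2 * m ∣ n := by
    obtain ⟨k, hk⟩ := heven
    exact ⟨k, by rw [← Nat.mul_div_cancel' hmn, hk]; ring⟩
  calc a ^ m + 1 ∣ a ^ (2 * m) - 1 := pow_two_mul_sub_one a m ▸ dvd_mul_right _ _
    _ ∣ a ^ n - 1 := pow_sub_one_dvd_pow_sub_one a h2mn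

lemma eq_one_of_odd_of_dvd_add_one_of_dvd_sub_one {g x : ℕ} (hg : Odd g) (h₁ : g ∣ x + 1)
    (h₂ : g ∣ x - 1) : g = 1 := by
  rcases x with _ | x
  · exact Nat.dvd_one.mp h₁
  · have hg2 : g ∣ 2 := by
      have := Nat.dvd_sub h₁ h₂
      rwa [show x + 1 + 1 - (x + 1 - 1) = 2 by omega] at this
    refine ((Nat.dvd_prime prime_two).mp hg2).resolve_right ?_
    rintro rfl
    exact absurd hg (by decide)

lemma odd_gcd_pow_add_one (ha : Even a) {r : ℕ} (hr : 0 < r) (s : ℕ) :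
    Odd (gcd (a ^ r + 1) (a ^ s + 1)) :=
  ((ha.pow_of_ne_zero hr.ne').add_one).of_dvd_nat (gcd_dvd_left _ _)

lemma gcd_pow_add_one_dvd_pow_gcd_add_one (ha : Even a) {r : ℕ} (hr : 0 < r) (s : ℕ) :
    gcd (a ^ r + 1) (a ^ s + 1) ∣ a ^ gcd r s + 1 := by
  set g := gcd (a ^ r + 1) (a ^ s + 1)
  have hodd : Odd g := odd_gcd_pow_add_one ha hr s
  have hg2d : g ∣ (a ^ gcd r s + 1) * (a ^ gcd r s - 1) := by
    rw [← pow_two_mul_sub_one, ← gcd_mul_left, ← pow_sub_one_gcd_pow_sub_one]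
    exact dvd_gcd ((gcd_dvd_left _ _).trans (pow_two_mul_sub_one a r ▸ dvd_mul_right _ _))
      ((gcd_dvd_right _ _).trans (pow_two_mul_sub_one a s ▸ dvd_mul_right _ _))
  have hcop : Coprime g (a ^ gcd r s - 1) := by
    have hc := gcd_dvd_left g (a ^ gcd r s - 1)
    exact eq_one_of_odd_of_dvd_add_one_of_dvd_sub_one (hodd.of_dvd_nat hc)
      (hc.trans (gcd_dvd_left _ _))
      ((gcd_dvd_right _ _).trans (pow_sub_one_dvd_pow_sub_one a (gcd_dvd_left r s)))
  exact hcop.dvd_of_dvd_mul_right hg2d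

end Nat

theorem gcd_two_pow_add_one_add_one_general (r s : ℕ) (hr : 0 < r) :
    (Odd (r / Nat.gcd r s) ∧ Odd (s / Nat.gcd r s) →
      Nat.gcd (2 ^ r + 1) (2 ^ s + 1) = 2 ^ Nat.gcd r s + 1) ∧
    (¬(Odd (r / Nat.gcd r s) ∧ Odd (s / Nat.gcd r s)) →
      Nat.gcd (2 ^ r + 1) (2 ^ s + 1) = 1) := by
  have hdvd := Nat.gcd_pow_add_one_dvd_pow_gcd_add_one even_two hr s
  have hodd := Nat.odd_gcd_pow_add_one even_two hr s
  refine ⟨fun ⟨hr', hs'⟩ ↦ Nat.dvd_antisymm hdvd (Nat.dvd_gcd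
    (Nat.pow_add_one_dvd_pow_add_one_of_odd (Nat.gcd_dvd_left r s) hr')
    (Nat.pow_add_one_dvd_pow_add_one_of_odd (Nat.gcd_dvd_right r s) hs')), fun h ↦ ?_⟩
  rw [not_and_or, Nat.not_odd_iff_even, Nat.not_odd_iff_even] at h
  rcases h with hr' | hs'
  · exact Nat.eq_one_of_odd_of_dvd_add_one_of_dvd_sub_one hodd (Nat.gcd_dvd_left _ _)
      (hdvd.trans (Nat.pow_add_one_dvd_pow_sub_one_of_even (Nat.gcd_dvd_left r s) hr'))
  · exact Nat.eq_one_of_odd_of_dvd_add_one_of_dvd_sub_one hodd (Nat.gcd_dvd_right _ _)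
      (hdvd.trans (Nat.pow_add_one_dvd_pow_sub_one_of_even (Nat.gcd_dvd_right r s) hs'))

theorem gcd_two_pow_add_one_add_one (r s : ℕ) (hr : 0 < r) (hs : 0 < s) :
    (Odd (r / Nat.gcd r s) ∧ Odd (s / Nat.gcd r s) →
      Nat.gcd (2 ^ r + 1) (2 ^ s + 1) = 2 ^ Nat.gcd r s + 1) ∧
    (¬(Odd (r / Nat.gcd r s) ∧ Odd (s / Nat.gcd r s)) →
      Nat.gcd (2 ^ r + 1) (2 ^ s + 1) = 1) :=
  gcd_two_pow_add_one_add_one_general r s hr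
end

section
/- Let n = 2m, s a positive integer, d = s(2^m - 1) + 1 with gcd(d, 2^n - 1) = 1, r := gcd(s, 2^m + 1) > 1 and gcd(s - 1, 2^m + 1) = 1. Then for every u ∈ U \ U^r, the map x ↦ u^{-1} x^d is a complete permutation of F_{2^n}, i.e., both x ↦ u^{-1} x^d and x ↦ u^{-1} x^d + x are bijections of F_{2^n}. -/
/-!
Write `q = 2^m`, so that `|F| = q²` and `U` is the kernel of `x ↦ x^(q+1)`. For `x ≠ 0` the
element `λ = x^(q-1)` lies in `U` and `x^d + u x = x (λ^s + u)`, where `λ^s + u ≠ 0` because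
`λ^s ∈ U^s ⊆ U^r ∌ u`. On `U` the Frobenius `y ↦ y^q` is inversion, which gives
`(λ^s + u)^(q-1) = (λ^s u)⁻¹` and hence `(x^d + u x)^(q-1) = λ^(1-s) u⁻¹`. So `x^d + u x`
determines `λ^(s-1)`, hence `λ` since `gcd(s-1, q+1) = 1`, and then `x` itself.
-/

open Function

theorem eq_of_pow_eq_pow_of_coprime {G₀ : Type*} [CommGroupWithZero G₀] {x y : G₀}
    (hy : y ≠ 0) {a b : ℕ} (hab : Nat.Coprime a b) (ha : x ^ a = y ^ a) (hb : x ^ b = y ^ b) :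
    x = y := by
  have h : (x / y) ^ Nat.gcd a b = 1 := by
    rw [pow_gcd_eq_one, div_pow, div_pow, ha, hb, div_self (pow_ne_zero _ hy),
      div_self (pow_ne_zero _ hy)]
    exact ⟨rfl, rfl⟩
  rwa [hab.gcd_eq_one, pow_one, div_eq_one_iff_eq hy] at h

theorem ne_zero_of_pow_eq_one {M₀ : Type*} [MonoidWithZero M₀] [Nontrivial M₀] {x : M₀} {n : ℕ}
    (h : x ^ (n + 1) = 1) : x ≠ 0 :=
  (IsUnit.of_pow_eq_one h n.succ_ne_zero).ne_zero

theorem pow_ne_of_not_exists_eq_pow_gcd {M : Type*} [Monoid M] {N s : ℕ} {u : M}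
    (hu : ¬ ∃ v : M, v ^ N = 1 ∧ u = v ^ Nat.gcd s N) {l : M} (hl : l ^ N = 1) : l ^ s ≠ u := by
  rintro rfl
  obtain ⟨t, ht⟩ := Nat.gcd_dvd_left s N
  refine hu ⟨l ^ t, ?_, ?_⟩
  · rw [← pow_mul, mul_comm, pow_mul, hl, one_pow]
  · rw [← pow_mul, mul_comm, ← ht]

/-- On the kernel of `y ↦ y^(q+1)`, with `q` a power of the characteristic, `y^q = y⁻¹`. -/
theorem add_pow_sub_one_mul_mul_eq_one {F : Type*} [Field F] {p : ℕ} [Fact p.Prime] [CharP F p]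
    (k : ℕ) {a b : F} (ha : a ^ (p ^ k + 1) = 1) (hb : b ^ (p ^ k + 1) = 1) (hab : a + b ≠ 0) :
    (a + b) ^ (p ^ k - 1) * (a * b) = 1 := by
  have hfrob : (a + b) ^ (p ^ k - 1) * (a + b) = a ^ p ^ k + b ^ p ^ k := by
    rw [← pow_succ, Nat.sub_add_cancel (Nat.one_le_pow _ _ (Fact.out : p.Prime).pos),
      add_pow_char_pow]
  refine mul_right_cancel₀ hab ?_
  linear_combination (a * b) * hfrob + b * ha + a * hb

theorem pow_niho_add_mul {R : Type*} [CommRing R] (q s : ℕ) (u x : R) :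
    x ^ (s * (q - 1) + 1) + u * x = x * ((x ^ (q - 1)) ^ s + u) := by
  rw [pow_succ, mul_comm s, pow_mul]
  ring

namespace FiniteField

variable {F : Type*} [Field F] [Fintype F]

theorem pow_injective_of_coprime {d : ℕ} (hd : d ≠ 0) (hcop : Nat.Coprime d (Fintype.card F - 1)) :
    Injective (fun x : F => x ^ d) := by
  intro x y hxy
  by_cases hy : y = 0
  · subst hy
    exact (pow_eq_zero_iff hd).mp (hxy.trans (zero_pow hd))
  have hx : x ≠ 0 := by
    rintro rfl
    exact hy ((pow_eq_zero_iff hd).mp (hxy.symm.trans (zero_pow hd)))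
  refine eq_of_pow_eq_pow_of_coprime hy hcop hxy ?_
  rw [pow_card_sub_one_eq_one x hx, pow_card_sub_one_eq_one y hy]

theorem pow_sub_one_pow_add_one {q : ℕ} (hF : Fintype.card F = q * q) {x : F} (hx : x ≠ 0) :
    (x ^ (q - 1)) ^ (q + 1) = 1 := by
  rw [← pow_mul, mul_comm, ← one_mul 1, ← Nat.mul_self_sub_mul_self_eq, one_mul, ← hF,
    pow_card_sub_one_eq_one x hx]

theorem pow_niho_add_mul_eq_zero_iff {q s : ℕ} {u : F} (hF : Fintype.card F = q * q)
    (hsu : ∀ l : F, l ^ (q + 1) = 1 → l ^ s + u ≠ 0) {x : F} :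
    x ^ (s * (q - 1) + 1) + u * x = 0 ↔ x = 0 := by
  refine ⟨fun h => by_contra fun hx => ?_, fun hx => by simp [hx]⟩
  rw [pow_niho_add_mul] at h
  exact mul_ne_zero hx (hsu _ (pow_sub_one_pow_add_one hF hx)) h

section Niho

variable {p : ℕ} [Fact p.Prime] [CharP F p] {k s : ℕ} {u : F}

theorem pow_niho_add_mul_pow_sub_one (hF : Fintype.card F = p ^ k * p ^ k)
    (hu : u ^ (p ^ k + 1) = 1) (hsu : ∀ l : F, l ^ (p ^ k + 1) = 1 → l ^ s + u ≠ 0)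
    {x : F} (hx : x ≠ 0) :
    (x ^ (s * (p ^ k - 1) + 1) + u * x) ^ (p ^ k - 1) * ((x ^ (p ^ k - 1)) ^ s * u) =
      x ^ (p ^ k - 1) := by
  set l := x ^ (p ^ k - 1)
  have hl : l ^ (p ^ k + 1) = 1 := pow_sub_one_pow_add_one hF hx
  have hls : (l ^ s) ^ (p ^ k + 1) = 1 := by rw [← pow_mul, mul_comm, pow_mul, hl, one_pow]
  rw [pow_niho_add_mul, mul_pow, mul_assoc, add_pow_sub_one_mul_mul_eq_one k hls hu (hsu l hl),
    mul_one]

theorem pow_sub_one_eq_of_pow_niho_add_mul_eq (hF : Fintype.card F = p ^ k * p ^ k)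
    (hu : u ^ (p ^ k + 1) = 1) (hsu : ∀ l : F, l ^ (p ^ k + 1) = 1 → l ^ s + u ≠ 0)
    (hs : 0 < s) (hcop : Nat.Coprime (s - 1) (p ^ k + 1)) {x y : F} (hx : x ≠ 0) (hy : y ≠ 0)
    (hxy : x ^ (s * (p ^ k - 1) + 1) + u * x = y ^ (s * (p ^ k - 1) + 1) + u * y) :
    x ^ (p ^ k - 1) = y ^ (p ^ k - 1) := by
  have hl := pow_sub_one_pow_add_one hF hx
  have hw := pow_sub_one_pow_add_one hF hy
  have hxG := pow_niho_add_mul_pow_sub_one hF hu hsu hx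
  have hyG := pow_niho_add_mul_pow_sub_one hF hu hsu hy
  rw [hxy] at hxG
  generalize x ^ (p ^ k - 1) = l at *
  generalize y ^ (p ^ k - 1) = w at *
  generalize (y ^ (s * (p ^ k - 1) + 1) + u * y) ^ (p ^ k - 1) = G at *
  obtain ⟨t, rfl⟩ : ∃ t, s = t + 1 := ⟨s - 1, by omega⟩
  have hlwu : l * w * u ≠ 0 := mul_ne_zero
    (mul_ne_zero (ne_zero_of_pow_eq_one hl) (ne_zero_of_pow_eq_one hw)) (ne_zero_of_pow_eq_one hu)
  have hpow : l ^ t = w ^ t := mul_right_cancel₀ hlwu <| by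
    linear_combination (w ^ (t + 1) * u) * hxG - (l ^ (t + 1) * u) * hyG
  exact eq_of_pow_eq_pow_of_coprime (ne_zero_of_pow_eq_one hw) hcop hpow (hl.trans hw.symm)

theorem pow_niho_add_mul_injective (hF : Fintype.card F = p ^ k * p ^ k)
    (hu : u ^ (p ^ k + 1) = 1) (hsu : ∀ l : F, l ^ (p ^ k + 1) = 1 → l ^ s + u ≠ 0)
    (hs : 0 < s) (hcop : Nat.Coprime (s - 1) (p ^ k + 1)) :
    Injective (fun x : F => x ^ (s * (p ^ k - 1) + 1) + u * x) := by
  intro x y hxy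
  simp only at hxy
  have h0 := (pow_niho_add_mul_eq_zero_iff hF hsu (x := (0 : F))).mpr rfl
  by_cases hx : x = 0
  · subst hx
    exact ((pow_niho_add_mul_eq_zero_iff hF hsu).mp (hxy.symm.trans h0)).symm
  by_cases hy : y = 0
  · subst hy
    exact (pow_niho_add_mul_eq_zero_iff hF hsu).mp (hxy.trans h0)
  have hlw := pow_sub_one_eq_of_pow_niho_add_mul_eq hF hu hsu hs hcop hx hy hxy
  rw [pow_niho_add_mul, pow_niho_add_mul, hlw] at hxy
  exact mul_right_cancel₀ (hsu _ (pow_sub_one_pow_add_one hF hy)) hxy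

end Niho

end FiniteField

theorem monomial_complete_permutation_general (n m s : ℕ) (hn : n = 2 * m) (hs : 0 < s)
    (F : Type*) [Field F] [Fintype F] (hcard : Fintype.card F = 2 ^ n)
    (d : ℕ) (hd : d = s * (2 ^ m - 1) + 1)
    (hgcd : Nat.gcd d (2 ^ n - 1) = 1)
    (hgcd2 : Nat.gcd (s - 1) (2 ^ m + 1) = 1)
    (u : F) (hu : u ^ (2 ^ m + 1) = 1)
    (hu2 : ¬ ∃ v : F, v ^ (2 ^ m + 1) = 1 ∧ u = v ^ Nat.gcd s (2 ^ m + 1)) :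
    Function.Bijective (fun x : F => u⁻¹ * x ^ d) ∧
    Function.Bijective (fun x : F => u⁻¹ * x ^ d + x) := by
  have : CharP F 2 := charP_of_card_eq_prime_pow hcard
  have hF : Fintype.card F = 2 ^ m * 2 ^ m := by rw [hcard, hn, two_mul, pow_add]
  have hsu : ∀ l : F, l ^ (2 ^ m + 1) = 1 → l ^ s + u ≠ 0 := fun l hl h =>
    pow_ne_of_not_exists_eq_pow_gcd hu2 hl (CharTwo.add_eq_zero.mp h)
  have hu0 : u ≠ 0 := ne_zero_of_pow_eq_one hu
  have hmul := mul_right_injective₀ (inv_ne_zero hu0)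
  have hcop : Nat.Coprime d (Fintype.card F - 1) := by rwa [hcard]
  subst hd
  refine ⟨Finite.injective_iff_bijective.mp
    (hmul.comp (FiniteField.pow_injective_of_coprime (Nat.succ_ne_zero _) hcop)), ?_⟩
  have hsplit : (fun x : F => u⁻¹ * x ^ (s * (2 ^ m - 1) + 1) + x) =
      (u⁻¹ * ·) ∘ fun x => x ^ (s * (2 ^ m - 1) + 1) + u * x := by
    funext x
    rw [comp_apply, mul_add, ← mul_assoc, inv_mul_cancel₀ hu0, one_mul]
  rw [hsplit]
  exact Finite.injective_iff_bijective.mp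
    (hmul.comp (FiniteField.pow_niho_add_mul_injective hF hu hsu hs hgcd2))

/-- Under the hypotheses of the Niho binomial theorem, `x ↦ u⁻¹ x^d` is a complete
permutation of `𝔽_{2^n}`: both `u⁻¹ x^d` and `u⁻¹ x^d + x` are bijections. -/
theorem monomial_complete_permutation (n m s : ℕ) (hm : 0 < m) (hn : n = 2 * m) (hs : 0 < s)
    (F : Type*) [Field F] [Fintype F] (hcard : Fintype.card F = 2 ^ n)
    (d : ℕ) (hd : d = s * (2 ^ m - 1) + 1)
    (hgcd : Nat.gcd d (2 ^ n - 1) = 1)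
    (hr : 1 < Nat.gcd s (2 ^ m + 1))
    (hgcd2 : Nat.gcd (s - 1) (2 ^ m + 1) = 1)
    (u : F) (hu : u ^ (2 ^ m + 1) = 1)
    (hu2 : ¬ ∃ v : F, v ^ (2 ^ m + 1) = 1 ∧ u = v ^ Nat.gcd s (2 ^ m + 1)) :
    Function.Bijective (fun x : F => u⁻¹ * x ^ d) ∧
    Function.Bijective (fun x : F => u⁻¹ * x ^ d + x) :=
  monomial_complete_permutation_general n m s hn hs F hcard d hd hgcd hgcd2 u hu hu2
end

section
/- Let n = 2m with m odd, d_1 = s(2^m - 1) + e, d_2 = (s - l)(2^m - 1) + e with e = 2^{k_3} + 1, s = 2^{k_3 - 1} - 2^{k_2 - 1} + 1, l = 2^{k_1} + 1, where k_1, k_2 are odd, k_2 ≥ 1, k_3 ≥ 1, and gcd(k_1, m) = 1. Then gcd(d_1, 2^n - 1) = 1, gcd(l, 2^m + 1) = 3, and gcd(e + l - 2s, 2^m + 1) = 1. -/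
/-!
A common divisor of `2^a + 1` and `2^b ± 1` also divides `2^{2a} - 1`, so by
`gcd(2^x - 1, 2^y - 1) = 2^{gcd(x,y)} - 1` it divides some `2^c - 1`, where parity
arguments give `c ∣ a`. Then it divides `2^a - 1` as well, hence `2`, and being odd it is `1`.
For `d₁` one works modulo the factors `2^m ∓ 1` of `2^n - 1`: there `d₁ ≡ e = 2^{k₃} + 1`
and `d₁ ≡ e - 2s = 2^{k₂} - 1` respectively; also `e + l - 2s = 2^{k₁} + 2^{k₂}`.
For odd `a, b` the same argument pins down `gcd(2^a + 1, 2^b + 1) = 2^{gcd(a,b)} + 1`,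
which is `3` for `(k₁, m)`.
-/

namespace Nat

lemma two_pow_add_one_dvd_two_pow_two_mul_sub_one (k : ℕ) : 2 ^ k + 1 ∣ 2 ^ (2 * k) - 1 :=
  Dvd.intro _ (by rw [← Nat.sq_sub_sq, one_pow, ← pow_mul, mul_comm])

lemma two_pow_add_one_dvd_two_pow_add_one {g a : ℕ} (hga : g ∣ a) (ha : Odd a) :
    2 ^ g + 1 ∣ 2 ^ a + 1 := by
  obtain ⟨c, rfl⟩ := hga
  simpa [pow_mul] using (Nat.odd_mul.mp ha).2.nat_add_dvd_pow_add_pow (2 ^ g) 1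

lemma odd_two_pow_add_one {m : ℕ} (hm : m ≠ 0) : Odd (2 ^ m + 1) :=
  ((Nat.even_pow' hm).mpr even_two).add_one

lemma odd_two_pow_sub_one {m : ℕ} (hm : m ≠ 0) : Odd (2 ^ m - 1) :=
  Nat.Even.sub_odd Nat.one_le_two_pow ((Nat.even_pow' hm).mpr even_two) odd_one

lemma dvd_two_pow_two_mul_gcd_sub_one {d a b : ℕ} (ha : d ∣ 2 ^ a + 1) (hb : d ∣ 2 ^ b + 1) :
    d ∣ 2 ^ (2 * gcd a b) - 1 := by
  have := Nat.dvd_gcd (ha.trans (two_pow_add_one_dvd_two_pow_two_mul_sub_one a))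
    (hb.trans (two_pow_add_one_dvd_two_pow_two_mul_sub_one b))
  rwa [pow_sub_one_gcd_pow_sub_one, gcd_mul_left] at this

lemma coprime_two_pow_add_one_two_pow_sub_one_of_dvd {a b : ℕ} (hb : b ≠ 0) (hba : b ∣ a) :
    Coprime (2 ^ a + 1) (2 ^ b - 1) := by
  have hdvd_sub : gcd (2 ^ a + 1) (2 ^ b - 1) ∣ 2 ^ a - 1 :=
    (gcd_dvd_right _ _).trans (pow_sub_one_dvd_pow_sub_one 2 hba)
  have hdvd_two : gcd (2 ^ a + 1) (2 ^ b - 1) ∣ 2 := by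
    have := Nat.dvd_sub (gcd_dvd_left _ _) hdvd_sub
    rwa [show 2 ^ a + 1 - (2 ^ a - 1) = 2 by have := Nat.one_le_two_pow (n := a); omega] at this
  have hodd : Odd (gcd (2 ^ a + 1) (2 ^ b - 1)) :=
    (odd_two_pow_sub_one hb).of_dvd_nat (gcd_dvd_right _ _)
  exact (coprime_two_right.mpr hodd).eq_one_of_dvd hdvd_two

lemma coprime_two_pow_add_one_two_pow_sub_one (k : ℕ) {m : ℕ} (hm : Odd m) :
    Coprime (2 ^ k + 1) (2 ^ m - 1) := by
  have hdvd : gcd (2 ^ k + 1) (2 ^ m - 1) ∣ 2 ^ gcd k m - 1 := by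
    have := Nat.dvd_gcd
      ((gcd_dvd_left (2 ^ k + 1) (2 ^ m - 1)).trans (two_pow_add_one_dvd_two_pow_two_mul_sub_one k))
      (gcd_dvd_right _ _)
    rwa [pow_sub_one_gcd_pow_sub_one, (coprime_two_left.mpr hm).gcd_mul_left_cancel] at this
  exact eq_one_of_dvd_coprimes
    (coprime_two_pow_add_one_two_pow_sub_one_of_dvd (gcd_ne_zero_right hm.pos.ne')
      (gcd_dvd_left k m))
    (gcd_dvd_left _ _) hdvd

lemma gcd_two_pow_add_one_two_pow_add_one {a b : ℕ} (ha : Odd a) (hb : Odd b) :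
    gcd (2 ^ a + 1) (2 ^ b + 1) = 2 ^ gcd a b + 1 := by
  set g := gcd a b
  have hg : g ≠ 0 := gcd_ne_zero_left ha.pos.ne'
  apply Nat.dvd_antisymm
  · have hdvd : gcd (2 ^ a + 1) (2 ^ b + 1) ∣ (2 ^ g + 1) * (2 ^ g - 1) := by
      rw [← Nat.sq_sub_sq, one_pow, ← pow_mul, mul_comm]
      exact dvd_two_pow_two_mul_gcd_sub_one (gcd_dvd_left _ _) (gcd_dvd_right _ _)
    exact ((coprime_two_pow_add_one_two_pow_sub_one_of_dvd hg (gcd_dvd_left a b)).coprime_dvd_left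
      (gcd_dvd_left _ _)).dvd_of_dvd_mul_right hdvd
  · exact Nat.dvd_gcd (two_pow_add_one_dvd_two_pow_add_one (gcd_dvd_left a b) ha)
      (two_pow_add_one_dvd_two_pow_add_one (gcd_dvd_right a b) hb)

lemma coprime_two_pow_add_one_of_even_of_odd {j m : ℕ} (hj : Even j) (hm : Odd m) :
    Coprime (2 ^ j + 1) (2 ^ m + 1) := by
  have hg : Odd (gcd j m) := hm.of_dvd_nat (gcd_dvd_right j m)
  have hdvd : 2 * gcd j m ∣ j :=
    (coprime_two_left.mpr hg).mul_dvd_of_dvd_of_dvd hj.two_dvd (gcd_dvd_left j m)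
  exact eq_one_of_dvd_coprimes
    (coprime_two_pow_add_one_two_pow_sub_one_of_dvd (mul_ne_zero two_ne_zero hg.pos.ne') hdvd)
    (gcd_dvd_left _ _) (dvd_two_pow_two_mul_gcd_sub_one (gcd_dvd_left _ _) (gcd_dvd_right _ _))

lemma coprime_two_pow_add_two_pow_two_pow_add_one {a b m : ℕ} (hab : Even (a + b)) (hm : Odd m) :
    Coprime (2 ^ a + 2 ^ b) (2 ^ m + 1) := by
  wlog hle : a ≤ b generalizing a b
  · rw [add_comm]; exact this (by rwa [add_comm]) (le_of_not_ge hle)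
  have hsplit : 2 ^ a + 2 ^ b = 2 ^ a * (2 ^ (b - a) + 1) := by
    rw [mul_add, ← pow_add, Nat.add_sub_cancel' hle, mul_one, add_comm]
  have hba : Even (b - a) := by
    rw [Nat.even_sub hle, ← Nat.even_add, add_comm]; exact hab
  rw [hsplit]
  exact (coprime_two_left.mpr (odd_two_pow_add_one hm.pos.ne')).pow_left a |>.mul_left
    (coprime_two_pow_add_one_of_even_of_odd hba hm)

end Nat

lemma isCoprime_two_pow_add_one_two_pow_sub_one (k : ℕ) {m : ℕ} (hm : Odd m) :
    IsCoprime ((2 : ℤ) ^ k + 1) (2 ^ m - 1) := by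
  have := Nat.isCoprime_iff_coprime.mpr (Nat.coprime_two_pow_add_one_two_pow_sub_one k hm)
  push_cast [Nat.one_le_two_pow] at this
  exact this

theorem prop1_case1_conditions_general (n m k₁ k₂ k₃ : ℕ)
    (hm : Odd m) (hn : n = 2 * m)
    (hk₁ : Odd k₁) (hk₂ : Odd k₂) (hk₂0 : 1 ≤ k₂) (hk₃0 : 1 ≤ k₃)
    (hk₁m : Nat.gcd k₁ m = 1)
    (e s l : ℤ) (he : e = 2 ^ k₃ + 1)
    (hs : s = 2 ^ (k₃ - 1) - 2 ^ (k₂ - 1) + 1) (hl : l = 2 ^ k₁ + 1)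
    (d₁ : ℤ) (hd₁ : d₁ = s * (2 ^ m - 1) + e) :
    Int.gcd d₁ (2 ^ n - 1) = 1 ∧
    Int.gcd l (2 ^ m + 1) = 3 ∧
    Int.gcd (e + l - 2 * s) (2 ^ m + 1) = 1 := by
  have h2k₂ : (2 : ℤ) ^ k₂ = 2 * 2 ^ (k₂ - 1) := by
    rw [← pow_succ', Nat.sub_add_cancel hk₂0]
  have h2k₃ : (2 : ℤ) ^ k₃ = 2 * 2 ^ (k₃ - 1) := by
    rw [← pow_succ', Nat.sub_add_cancel hk₃0]
  refine ⟨?_, ?_, ?_⟩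
  · have hmod_sub : d₁ = e + (2 ^ m - 1) * s := by rw [hd₁]; ring
    have hmod_add : d₁ = (2 ^ k₂ - 1) + (2 ^ m + 1) * s := by
      rw [hd₁, he, hs]; linear_combination h2k₃ - h2k₂
    rw [← Int.isCoprime_iff_gcd_eq_one, hn,
      show (2 : ℤ) ^ (2 * m) - 1 = (2 ^ m - 1) * (2 ^ m + 1) by ring]
    refine IsCoprime.mul_right ?_ ?_
    · rw [hmod_sub, IsCoprime.add_mul_left_left_iff, he]
      exact isCoprime_two_pow_add_one_two_pow_sub_one k₃ hm
    · rw [hmod_add, IsCoprime.add_mul_left_left_iff]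
      exact (isCoprime_two_pow_add_one_two_pow_sub_one m hk₂).symm
  · rw [hl]
    exact_mod_cast (Nat.gcd_two_pow_add_one_two_pow_add_one hk₁ hm).trans (by rw [hk₁m]; rfl)
  · have hsum : e + l - 2 * s = 2 ^ k₁ + 2 ^ k₂ := by
      rw [he, hl, hs]; linear_combination h2k₃ - h2k₂
    rw [hsum]
    exact_mod_cast Nat.coprime_two_pow_add_two_pow_two_pow_add_one (hk₁.add_odd hk₂) hm

/-- Arithmetic conditions of Proposition 1, case (1): with `m` odd, `e = 2^{k₃}+1`,
`s = 2^{k₃-1} - 2^{k₂-1} + 1`, `l = 2^{k₁}+1` (`k₁, k₂` odd, `gcd(k₁, m) = 1`), and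
`d₁ = s(2^m-1)+e`, one has `gcd(d₁, 2^{2m}-1) = 1`, `gcd(l, 2^m+1) = 3` and
`gcd(e+l-2s, 2^m+1) = 1` (computed in `ℤ` since `s` may be negative). -/
theorem prop1_case1_conditions (n m k₁ k₂ k₃ : ℕ)
    (hm : Odd m) (hm0 : 0 < m) (hn : n = 2 * m)
    (hk₁ : Odd k₁) (hk₂ : Odd k₂) (hk₂0 : 1 ≤ k₂) (hk₃0 : 1 ≤ k₃)
    (hk₁m : Nat.gcd k₁ m = 1)
    (e s l : ℤ) (he : e = 2 ^ k₃ + 1)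
    (hs : s = 2 ^ (k₃ - 1) - 2 ^ (k₂ - 1) + 1) (hl : l = 2 ^ k₁ + 1)
    (d₁ : ℤ) (hd₁ : d₁ = s * (2 ^ m - 1) + e) :
    Int.gcd d₁ (2 ^ n - 1) = 1 ∧
    Int.gcd l (2 ^ m + 1) = 3 ∧
    Int.gcd (e + l - 2 * s) (2 ^ m + 1) = 1 :=
  prop1_case1_conditions_general n m k₁ k₂ k₃ hm hn hk₁ hk₂ hk₂0 hk₃0 hk₁m e s l he hs hl d₁ hd₁
end
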